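/- Let N ≥ 3 be an integer and let φ : [0,∞) → ℝ be twice continuously differentiable such that there exist constants 0 < φ₀ < φ₁ and C > 0 with, for all s ≥ 0: φ₀ ≤ φ(s) ≤ φ₁, s·|φ'(s)| ≤ C, φ(s) + 2s·φ'(s) ≥ φ₀, s²·|φ''(s)| ≤ C, 3φ'(s) + 2s·|φ''(s)| ≤ 0, and φ(s) + 5s·φ'(s) − 2s²·|φ''(s)| ≥ 0. Let Φ(s) = ∫₀^s φ(τ) dτ. Then for every fixed s ∈ ℝ, the function b ↦ J₂(s,b) := Φ((s² + b²)/2) − (1/N)·φ((s² + b²)/2)·b² is monotone increasing and convex on [0,∞). -/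

import Mathlib

/-!
With `u = (s² + b²)/2` and `c = 1/N`, the derivatives in `b` are
`J' = b ((1 - 2c) φ(u) - c φ'(u) b²)` and
`J'' = (1 - 2c) φ(u) + (1 - 5c) φ'(u) b² - c φ''(u) b⁴`.
The structural inequalities (φ4) give `φ' ≤ 0` and `φ(u) + 2u φ'(u) ≥ 0`, so `φ ≥ 0` and `J' ≥ 0`.
Since `t = b²` ranges over `[0, 2u]`, writing
`J'' = (1 - 2c)(φ + φ' t) + c t (-3φ' - φ'' t)` shows `J'' ≥ 0` as soon as `c ≤ 1/2`.
-/

open Set intervalIntegral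

theorem hasDerivWithinAt_integral_Ici {f : ℝ → ℝ} {a x : ℝ} (hf : ContinuousOn f (Ici a))
    (hx : a ≤ x) : HasDerivWithinAt (fun u => ∫ τ in a..u, f τ) (f x) (Ici a) x := by
  have hint : IntervalIntegrable f MeasureTheory.volume a x :=
    (hf.mono (uIcc_of_le hx ▸ Icc_subset_Ici_self)).intervalIntegrable
  rcases hx.eq_or_lt with rfl | hx
  · exact integral_hasDerivWithinAt_right hint
      ((hf.mono Ioi_subset_Ici_self).stronglyMeasurableAtFilter_nhdsWithin measurableSet_Ioi a)
      ((hf a self_mem_Ici).mono Ioi_subset_Ici_self)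
  · exact (integral_hasDerivAt_right hint
      ((hf.mono Ioi_subset_Ici_self).stronglyMeasurableAtFilter isOpen_Ioi x hx)
      ((hf x hx.le).continuousAt (Ici_mem_nhds hx))).hasDerivWithinAt

theorem hasDerivAt_comp_half_sq_add_sq {f f' : ℝ → ℝ}
    (hf : ∀ x ∈ Ici (0 : ℝ), HasDerivWithinAt f (f' x) (Ici 0) x) (s b : ℝ) :
    HasDerivAt (fun b => f ((s ^ 2 + b ^ 2) / 2)) (f' ((s ^ 2 + b ^ 2) / 2) * b) b := by
  have hmem : ∀ b : ℝ, (s ^ 2 + b ^ 2) / 2 ∈ Ici (0 : ℝ) := fun b => by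
    simp only [mem_Ici]; positivity
  have hu : HasDerivAt (fun b : ℝ => (s ^ 2 + b ^ 2) / 2) b b :=
    (((hasDerivAt_pow 2 b).const_add (s ^ 2)).div_const 2).congr_deriv (by norm_num)
  exact (hf _ (hmem b)).comp_hasDerivAt b hu (Filter.Eventually.of_forall hmem)

section Structural

variable {p q r x c t : ℝ}

theorem nonpos_of_three_mul_add_two_mul_abs_nonpos (hx : 0 ≤ x) (h4a : 3 * q + 2 * x * |r| ≤ 0) :
    q ≤ 0 := by
  nlinarith [mul_nonneg hx (abs_nonneg r)]

theorem add_two_mul_mul_nonneg (hx : 0 ≤ x) (h4a : 3 * q + 2 * x * |r| ≤ 0)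
    (h4b : 0 ≤ p + 5 * x * q - 2 * x ^ 2 * |r|) : 0 ≤ p + 2 * x * q := by
  nlinarith [mul_nonneg hx (abs_nonneg r), mul_nonneg (mul_nonneg hx hx) (abs_nonneg r),
    mul_nonneg hx (neg_nonneg.2 (nonpos_of_three_mul_add_two_mul_abs_nonpos hx h4a))]

theorem one_sub_two_mul_mul_sub_mul_nonneg (hc0 : 0 ≤ c) (hc : c ≤ 1 / 2) (hx : 0 ≤ x)
    (ht : 0 ≤ t) (h4a : 3 * q + 2 * x * |r| ≤ 0) (hp : 0 ≤ p + 2 * x * q) :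
    0 ≤ (1 - 2 * c) * p - c * q * t := by
  have hq := nonpos_of_three_mul_add_two_mul_abs_nonpos hx h4a
  have hp0 : 0 ≤ p := by nlinarith
  nlinarith [mul_nonneg hc0 (mul_nonneg (neg_nonneg.2 hq) ht)]

theorem one_sub_two_mul_mul_add_sub_mul_sq_nonneg (hc0 : 0 ≤ c) (hc : c ≤ 1 / 2) (ht0 : 0 ≤ t)
    (htx : t ≤ 2 * x) (h4a : 3 * q + 2 * x * |r| ≤ 0) (hp : 0 ≤ p + 2 * x * q) :
    0 ≤ (1 - 2 * c) * p + (1 - 5 * c) * q * t - c * r * t ^ 2 := by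
  have hq := nonpos_of_three_mul_add_two_mul_abs_nonpos (by linarith) h4a
  have h1 : 0 ≤ p + q * t := by nlinarith
  have h2 : 0 ≤ -3 * q - r * t := by
    nlinarith [mul_le_mul_of_nonneg_left htx (abs_nonneg r),
      mul_le_mul_of_nonneg_right (le_abs_self r) ht0]
  nlinarith [mul_nonneg (by linarith : 0 ≤ 1 - 2 * c) h1, mul_nonneg (mul_nonneg hc0 ht0) h2]

end Structural

theorem monotoneOn_convexOn_sub_mul_sq {φ φ' φ'' Φ : ℝ → ℝ} {c : ℝ} (hc0 : 0 ≤ c)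
    (hc : c ≤ 1 / 2)
    (hφ : ∀ x ∈ Ici (0 : ℝ), HasDerivWithinAt φ (φ' x) (Ici 0) x)
    (hφ' : ∀ x ∈ Ici (0 : ℝ), HasDerivWithinAt φ' (φ'' x) (Ici 0) x)
    (hΦ : ∀ x ∈ Ici (0 : ℝ), HasDerivWithinAt Φ (φ x) (Ici 0) x)
    (h4a : ∀ x ∈ Ici (0 : ℝ), 3 * φ' x + 2 * x * |φ'' x| ≤ 0)
    (h4b : ∀ x ∈ Ici (0 : ℝ), 0 ≤ φ x + 5 * x * φ' x - 2 * x ^ 2 * |φ'' x|) (s : ℝ) :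
    MonotoneOn (fun b => Φ ((s ^ 2 + b ^ 2) / 2) - c * φ ((s ^ 2 + b ^ 2) / 2) * b ^ 2) (Ici 0) ∧
      ConvexOn ℝ (Ici 0) (fun b => Φ ((s ^ 2 + b ^ 2) / 2) - c * φ ((s ^ 2 + b ^ 2) / 2) * b ^ 2) := by
  set u : ℝ → ℝ := fun b => (s ^ 2 + b ^ 2) / 2
  set J' : ℝ → ℝ := fun b => b * ((1 - 2 * c) * φ (u b) - c * φ' (u b) * b ^ 2)
  set J'' : ℝ → ℝ := fun b =>
    (1 - 2 * c) * φ (u b) + (1 - 5 * c) * φ' (u b) * b ^ 2 - c * φ'' (u b) * (b ^ 2) ^ 2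
  have hu0 : ∀ b, 0 ≤ u b := fun b => by positivity
  have hJ : ∀ b, HasDerivAt (fun b => Φ (u b) - c * φ (u b) * b ^ 2) (J' b) b := fun b =>
    ((hasDerivAt_comp_half_sq_add_sq hΦ s b).sub
      (((hasDerivAt_comp_half_sq_add_sq hφ s b).const_mul c).mul (hasDerivAt_pow 2 b))).congr_deriv
      (by simp only [J']; ring)
  have hJ' : ∀ b, HasDerivAt J' (J'' b) b := fun b =>
    ((hasDerivAt_id' b).mul (((hasDerivAt_comp_half_sq_add_sq hφ s b).const_mul (1 - 2 * c)).sub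
      (((hasDerivAt_comp_half_sq_add_sq hφ' s b).const_mul c).mul
        (hasDerivAt_pow 2 b)))).congr_deriv
      (by simp only [J'', u, Pi.sub_apply, Pi.mul_apply]; ring)
  have hp : ∀ b, 0 ≤ φ (u b) + 2 * u b * φ' (u b) := fun b =>
    add_two_mul_mul_nonneg (hu0 b) (h4a _ (hu0 b)) (h4b _ (hu0 b))
  have hJ'_nonneg : ∀ b ∈ Ici (0 : ℝ), 0 ≤ J' b := fun b hb =>
    mul_nonneg hb (one_sub_two_mul_mul_sub_mul_nonneg hc0 hc (hu0 b) (sq_nonneg b)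
      (h4a _ (hu0 b)) (hp b))
  have hJ''_nonneg : ∀ b, 0 ≤ J'' b := fun b =>
    one_sub_two_mul_mul_add_sub_mul_sq_nonneg hc0 hc (sq_nonneg b)
      (by simp only [u]; nlinarith [sq_nonneg s]) (h4a _ (hu0 b)) (hp b)
  have hcont : ContinuousOn (fun b => Φ (u b) - c * φ (u b) * b ^ 2) (Ici 0) :=
    fun b _ => (hJ b).continuousAt.continuousWithinAt
  exact ⟨monotoneOn_of_hasDerivWithinAt_nonneg (convex_Ici 0) hcont
      (fun b _ => (hJ b).hasDerivWithinAt) (fun b hb => hJ'_nonneg b (interior_subset hb)),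
    convexOn_of_hasDerivWithinAt2_nonneg (convex_Ici 0) hcont
      (fun b _ => (hJ b).hasDerivWithinAt) (fun b _ => (hJ' b).hasDerivWithinAt)
      (fun b _ => hJ''_nonneg b)⟩

theorem J2_monotone_convex_general
    (N : ℕ) (hN : 3 ≤ N)
    (φ φ' φ'' : ℝ → ℝ)
    (hderiv : ∀ s ∈ Set.Ici (0:ℝ), HasDerivWithinAt φ (φ' s) (Set.Ici 0) s)
    (hderiv2 : ∀ s ∈ Set.Ici (0:ℝ), HasDerivWithinAt φ' (φ'' s) (Set.Ici 0) s)
    (hphi4a : ∀ s ∈ Set.Ici (0:ℝ), 3 * φ' s + 2 * s * |φ'' s| ≤ 0)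
    (hphi4b : ∀ s ∈ Set.Ici (0:ℝ), 0 ≤ φ s + 5 * s * φ' s - 2 * s ^ 2 * |φ'' s|)
    (Φ : ℝ → ℝ) (hΦ : ∀ s : ℝ, Φ s = ∫ τ in (0:ℝ)..s, φ τ) :
    ∀ s : ℝ,
      MonotoneOn (fun b : ℝ =>
        Φ ((s ^ 2 + b ^ 2) / 2) - (1 / (N : ℝ)) * φ ((s ^ 2 + b ^ 2) / 2) * b ^ 2)
        (Set.Ici 0) ∧
      ConvexOn ℝ (Set.Ici 0) (fun b : ℝ =>
        Φ ((s ^ 2 + b ^ 2) / 2) - (1 / (N : ℝ)) * φ ((s ^ 2 + b ^ 2) / 2) * b ^ 2) := by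
  have hN' : (3 : ℝ) ≤ N := by exact_mod_cast hN
  have hc : 1 / (N : ℝ) ≤ 1 / 2 := one_div_le_one_div_of_le two_pos (by linarith)
  have hΦ' : ∀ x ∈ Ici (0 : ℝ), HasDerivWithinAt Φ (φ x) (Ici 0) x := by
    rw [funext hΦ]
    exact fun x hx =>
      hasDerivWithinAt_integral_Ici (fun y hy => (hderiv y hy).continuousWithinAt) hx
  exact monotoneOn_convexOn_sub_mul_sq (by positivity) hc hderiv hderiv2 hΦ' hphi4a hphi4b

/-- Lemma 6.1(ii): under conditions (φ1), (φ3), (φ4), for each fixed `s` the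
function `b ↦ J₂(s,b) = Φ((s²+b²)/2) − (1/N)φ((s²+b²)/2)·b²` is monotone
increasing and convex on `[0,∞)`. -/
theorem J2_monotone_convex
    (N : ℕ) (hN : 3 ≤ N)
    (φ φ' φ'' : ℝ → ℝ) (φ₀ φ₁ C : ℝ)
    (hφ₀ : 0 < φ₀) (hφ₀₁ : φ₀ < φ₁) (hC : 0 < C)
    (hderiv : ∀ s ∈ Set.Ici (0:ℝ), HasDerivWithinAt φ (φ' s) (Set.Ici 0) s)
    (hderiv2 : ∀ s ∈ Set.Ici (0:ℝ), HasDerivWithinAt φ' (φ'' s) (Set.Ici 0) s)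
    (hderivcont : ContinuousOn φ'' (Set.Ici 0))
    (hbnd : ∀ s ∈ Set.Ici (0:ℝ), φ₀ ≤ φ s ∧ φ s ≤ φ₁)
    (hd1 : ∀ s ∈ Set.Ici (0:ℝ), s * |φ' s| ≤ C)
    (hphi3 : ∀ s ∈ Set.Ici (0:ℝ), φ₀ ≤ φ s + 2 * s * φ' s)
    (hd2 : ∀ s ∈ Set.Ici (0:ℝ), s ^ 2 * |φ'' s| ≤ C)
    (hphi4a : ∀ s ∈ Set.Ici (0:ℝ), 3 * φ' s + 2 * s * |φ'' s| ≤ 0)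
    (hphi4b : ∀ s ∈ Set.Ici (0:ℝ), 0 ≤ φ s + 5 * s * φ' s - 2 * s ^ 2 * |φ'' s|)
    (Φ : ℝ → ℝ) (hΦ : ∀ s : ℝ, Φ s = ∫ τ in (0:ℝ)..s, φ τ) :
    ∀ s : ℝ,
      MonotoneOn (fun b : ℝ =>
        Φ ((s ^ 2 + b ^ 2) / 2) - (1 / (N : ℝ)) * φ ((s ^ 2 + b ^ 2) / 2) * b ^ 2)
        (Set.Ici 0) ∧
      ConvexOn ℝ (Set.Ici 0) (fun b : ℝ =>
        Φ ((s ^ 2 + b ^ 2) / 2) - (1 / (N : ℝ)) * φ ((s ^ 2 + b ^ 2) / 2) * b ^ 2) :=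
  J2_monotone_convex_general N hN φ φ' φ'' hderiv hderiv2 hphi4a hphi4b Φ hΦ
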